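/- Let f_Q be a Q-level quantizer. Then the function c ↦ E[f_Q(c·g)·g], defined for c > 0, is differentiable at c = 1, with derivative equal to Σ_{i=2}^{Q} (m_i − m_{i−1}) τ_i² φ(τ_i). -/

import Mathlib

noncomputable section
open MeasureTheory ProbabilityTheory Real Set

/-- The standard Gaussian measure on `ℝ`. -/
def stdGauss : Measure ℝ := gaussianReal 0 1

instance : IsProbabilityMeasure stdGauss := by unfold stdGauss; infer_instance

/-- A `Q`-level quantizer: thresholds `-∞ = τ₁ < τ₂ < … < τ_{Q+1} = +∞` (indexed here by
`Fin (Q+1)`, so `τ 0 = ⊥` and `τ (Fin.last Q) = ⊤`) and values `m₁, …, m_Q`, with the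
step function `f` equal to `m i` on the cell `[τ i, τ (i+1))`. -/
structure Quantizer (Q : ℕ) where
  m : Fin Q → ℝ
  τ : Fin (Q + 1) → EReal
  f : ℝ → ℝ
  τ_bot : τ 0 = ⊥
  τ_top : τ (Fin.last Q) = ⊤
  τ_mono : StrictMono τ
  f_eq : ∀ (i : Fin Q) (t : ℝ), τ i.castSucc ≤ (t : EReal) → (t : EReal) < τ i.succ → f t = m i

/-- The `i`-th quantization cell `[τ_i, τ_{i+1})` (as a subset of `ℝ`). -/
def Quantizer.cell {Q : ℕ} (q : Quantizer Q) (i : Fin Q) : Set ℝ :=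
  {t : ℝ | q.τ i.castSucc ≤ (t : EReal) ∧ (t : EReal) < q.τ i.succ}

/-- The mean squared error `E[(f_Q(g) - g)²]` of a quantizer. -/
def MSE {Q : ℕ} (q : Quantizer Q) : ℝ := ∫ t, (q.f t - t) ^ 2 ∂stdGauss

/-- Standard Gaussian density `φ(τ) = (2π)^{-1/2} e^{-τ²/2}`. -/
def phi (t : ℝ) : ℝ := (Real.sqrt (2 * Real.pi))⁻¹ * Real.exp (-t ^ 2 / 2)

/-! For `c > 0`, splitting `f_Q` along its cells and using that `-φ` is an antiderivative of
`t φ(t)` vanishing at `±∞` gives the closed form `E[f_Q(c g) g] = Σᵢ mᵢ (φ(τᵢ/c) - φ(τᵢ₊₁/c))`.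
Each `φ(τ/c)` has derivative `τ² φ(τ)` at `c = 1`, and summation by parts, whose boundary terms
vanish at `τ = ±∞`, turns the derivative into the stated sum. -/

open Filter Topology

lemma integral_stdGauss_eq_integral_phi_mul (g : ℝ → ℝ) :
    ∫ t, g t ∂stdGauss = ∫ t, phi t * g t := by
  have hpdf : gaussianPDFReal 0 1 = phi := by
    ext t
    simp [gaussianPDFReal, phi]
  rw [stdGauss, integral_gaussianReal_eq_integral_smul one_ne_zero, hpdf]
  rfl

lemma continuous_phi : Continuous phi := by
  unfold phi
  fun_prop

lemma hasDerivAt_phi (x : ℝ) : HasDerivAt phi (-(x * phi x)) x := by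
  have hsq : HasDerivAt (fun t : ℝ => -t ^ 2 / 2) (-x) x :=
    ((hasDerivAt_pow 2 x).fun_neg.div_const 2).congr_deriv (by ring)
  refine (hsq.exp.const_mul (√(2 * π))⁻¹).congr_deriv ?_
  simp only [phi]
  ring

lemma tendsto_phi_cocompact : Tendsto phi (cocompact ℝ) (𝓝 0) := by
  have hsq : Tendsto (fun t : ℝ => -t ^ 2 / 2) (cocompact ℝ) atBot := by
    have := (tendsto_pow_atTop two_ne_zero).comp (tendsto_norm_cocompact_atTop (E := ℝ))
    simpa [Function.comp_def] using (tendsto_neg_atTop_atBot.comp this).atBot_div_const two_pos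
  have := (tendsto_exp_atBot.comp hsq).const_mul (√(2 * π))⁻¹
  rw [mul_zero] at this
  exact this

lemma integrable_mul_phi : Integrable fun t : ℝ => t * phi t := by
  refine ((integrable_mul_exp_neg_mul_sq (b := 2⁻¹) (by norm_num)).const_mul
    (√(2 * π))⁻¹).congr (ae_of_all _ fun t => ?_)
  simp only [phi]
  ring_nf

lemma hasDerivAt_neg_phi (x : ℝ) : HasDerivAt (fun t => -phi t) (x * phi x) x := by
  have := (hasDerivAt_phi x).neg
  rw [neg_neg] at this
  exact this

lemma integral_Ici_mul_phi (r : ℝ) : ∫ t in Ici r, t * phi t = phi r := by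
  rw [integral_Ici_eq_integral_Ioi, integral_Ioi_of_hasDerivAt_of_tendsto
    continuous_phi.neg.continuousWithinAt (fun x _ => hasDerivAt_neg_phi x)
    integrable_mul_phi.integrableOn (tendsto_phi_cocompact.mono_left atTop_le_cocompact).neg]
  simp

lemma integral_mul_phi : ∫ t, t * phi t = 0 := by
  rw [integral_of_hasDerivAt_of_tendsto hasDerivAt_neg_phi integrable_mul_phi
    (tendsto_phi_cocompact.mono_left atBot_le_cocompact).neg
    (tendsto_phi_cocompact.mono_left atTop_le_cocompact).neg]
  simp

/-- `φ(a / c)`, set to `0` at `a = ±∞` so that it is `∫_{c t ≥ a} t φ(t) dt` for every `a`. -/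
def scaledPhi (c : ℝ) (a : EReal) : ℝ := if a = ⊥ ∨ a = ⊤ then 0 else phi (a.toReal / c)

lemma measurableSet_scaled_Ici (c : ℝ) (a : EReal) :
    MeasurableSet {t : ℝ | a ≤ ((c * t : ℝ) : EReal)} :=
  measurableSet_le measurable_const (measurable_coe_real_ereal.comp (measurable_const_mul c))

lemma setIntegral_scaled_Ici_mul_phi {c : ℝ} (hc : 0 < c) (a : EReal) :
    ∫ t in {t : ℝ | a ≤ ((c * t : ℝ) : EReal)}, t * phi t = scaledPhi c a := by
  induction a using EReal.rec with
  | bot => simp only [bot_le, ofPred_true, Measure.restrict_univ, integral_mul_phi, scaledPhi,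
      true_or, if_true]
  | top => simp only [top_le_iff, EReal.coe_ne_top, ofPred_false, Measure.restrict_empty,
      integral_zero_measure, scaledPhi, or_true, if_true]
  | coe r =>
    have hset : {t : ℝ | (r : EReal) ≤ ((c * t : ℝ) : EReal)} = Ici (r / c) := by
      ext t
      simp only [EReal.coe_le_coe_iff, mem_ofPred_eq, mem_Ici, div_le_iff₀ hc, mul_comm]
    simp only [hset, integral_Ici_mul_phi, scaledPhi, EReal.coe_ne_bot, EReal.coe_ne_top,
      or_self, if_false, EReal.toReal_coe]

lemma setIntegral_scaled_Ico_mul_phi {c : ℝ} (hc : 0 < c) {a b : EReal} (hab : a ≤ b) :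
    ∫ t in {t : ℝ | a ≤ ((c * t : ℝ) : EReal) ∧ ((c * t : ℝ) : EReal) < b}, t * phi t
      = scaledPhi c a - scaledPhi c b := by
  have hset : {t : ℝ | a ≤ ((c * t : ℝ) : EReal) ∧ ((c * t : ℝ) : EReal) < b}
      = {t : ℝ | a ≤ ((c * t : ℝ) : EReal)} \ {t : ℝ | b ≤ ((c * t : ℝ) : EReal)} := by
    ext t
    simp only [mem_ofPred_eq, Set.mem_sdiff, not_le]
  have hsub : {t : ℝ | b ≤ ((c * t : ℝ) : EReal)} ⊆ {t : ℝ | a ≤ ((c * t : ℝ) : EReal)} :=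
    fun t ht => hab.trans ht
  rw [hset, setIntegral_sdiff (measurableSet_scaled_Ici c b) integrable_mul_phi.integrableOn hsub,
    setIntegral_scaled_Ici_mul_phi hc, setIntegral_scaled_Ici_mul_phi hc]

lemma hasDerivAt_scaledPhi (a : EReal) :
    HasDerivAt (fun c => scaledPhi c a) (a.toReal ^ 2 * phi a.toReal) 1 := by
  induction a using EReal.rec with
  | bot => simpa [scaledPhi] using hasDerivAt_const (1 : ℝ) (0 : ℝ)
  | top => simpa [scaledPhi] using hasDerivAt_const (1 : ℝ) (0 : ℝ)
  | coe r =>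
    have hdiv : HasDerivAt (fun c : ℝ => r / c) (-r) 1 :=
      ((hasDerivAt_const 1 r).div (hasDerivAt_id 1) one_ne_zero).congr_deriv (by simp)
    have hphi : HasDerivAt phi (-(r * phi r)) (r / 1) := by
      rw [div_one]
      exact hasDerivAt_phi r
    have hcomp := hphi.comp 1 hdiv
    simp only [scaledPhi, EReal.coe_ne_bot, EReal.coe_ne_top, or_self, if_false, EReal.toReal_coe]
    exact hcomp.congr_deriv (by ring)

namespace Quantizer

variable {Q : ℕ} (q : Quantizer Q)

lemma exists_mem_cell (t : ℝ) : ∃ i, t ∈ q.cell i := by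
  obtain ⟨j, hj⟩ := exists_minimal_of_wellFoundedLT (fun j => (t : EReal) < q.τ j)
    ⟨Fin.last Q, q.τ_top ▸ EReal.coe_lt_top t⟩
  have hj0 : j ≠ 0 := by
    rintro rfl
    exact not_lt_bot (q.τ_bot ▸ hj.prop)
  obtain ⟨i, rfl⟩ := Fin.exists_succ_eq.mpr hj0
  exact ⟨i, not_lt.mp (hj.not_prop_of_lt i.castSucc_lt_succ), hj.prop⟩

lemma notMem_cell_of_lt {i j : Fin Q} (hij : i < j) {t : ℝ} (hi : t ∈ q.cell i) :
    t ∉ q.cell j := fun hj =>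
  (hi.2.trans_le ((q.τ_mono.monotone (Fin.succ_le_castSucc_iff.mpr hij)).trans hj.1)).false

lemma f_eq_sum_indicator (t : ℝ) : q.f t = ∑ i, (q.cell i).indicator (fun _ => q.m i) t := by
  obtain ⟨i, hi⟩ := q.exists_mem_cell t
  rw [Finset.sum_eq_single i, indicator_of_mem hi, q.f_eq i t hi.1 hi.2]
  · intro j _ hji
    rcases hji.lt_or_gt with hlt | hlt
    · exact indicator_of_notMem (fun hj => q.notMem_cell_of_lt hlt hj hi) _
    · exact indicator_of_notMem (q.notMem_cell_of_lt hlt hi) _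
  · simp

lemma integral_f_mul_eq_sum_scaledPhi {c : ℝ} (hc : 0 < c) :
    ∫ t, q.f (c * t) * t ∂stdGauss
      = ∑ i, q.m i * (scaledPhi c (q.τ i.castSucc) - scaledPhi c (q.τ i.succ)) := by
  set S : Fin Q → Set ℝ := fun i => {t | c * t ∈ q.cell i}
  have hS (i : Fin Q) : MeasurableSet (S i) :=
    (measurableSet_scaled_Ici c _).inter (measurableSet_lt
      (measurable_coe_real_ereal.comp (measurable_const_mul c)) measurable_const)
  have hsplit (t : ℝ) : phi t * (q.f (c * t) * t)
      = ∑ i, q.m i * (S i).indicator (fun t => t * phi t) t := by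
    rw [q.f_eq_sum_indicator, Finset.sum_mul, Finset.mul_sum]
    refine Finset.sum_congr rfl fun i _ => ?_
    by_cases ht : c * t ∈ q.cell i
    · rw [indicator_of_mem ht, indicator_of_mem (show t ∈ S i from ht)]
      ring
    · rw [indicator_of_notMem ht, indicator_of_notMem (show t ∉ S i from ht)]
      ring
  rw [integral_stdGauss_eq_integral_phi_mul, integral_congr_ae (ae_of_all _ hsplit),
    integral_finsetSum _ fun i _ => (integrable_mul_phi.indicator (hS i)).const_mul (q.m i)]
  refine Finset.sum_congr rfl fun i _ => ?_
  rw [integral_const_mul, integral_indicator (hS i)]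
  exact congrArg _ (setIntegral_scaled_Ico_mul_phi hc (q.τ_mono.monotone i.castSucc_le_succ))

end Quantizer

lemma sum_mul_sub_succ_eq_sum_sub_mul {Q : ℕ} (a : Fin Q → ℝ) (d : Fin (Q + 1) → ℝ)
    (h0 : d 0 = 0) (hlast : d (Fin.last Q) = 0) :
    ∑ i, a i * (d i.castSucc - d i.succ) = ∑ i : Fin Q, if _ : (i : ℕ) = 0 then 0 else
      (a i - a ⟨(i : ℕ) - 1, lt_of_le_of_lt (Nat.sub_le _ _) i.isLt⟩) * d i.castSucc := by
  cases Q with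
  | zero => simp
  | succ n =>
    have hprev (i : Fin n) : (⟨(i.succ : ℕ) - 1, lt_of_le_of_lt (Nat.sub_le _ _) i.succ.isLt⟩ :
        Fin (n + 1)) = i.castSucc := Fin.ext (by simp)
    simp only [mul_sub, Finset.sum_sub_distrib]
    rw [Fin.sum_univ_succ (fun i => a i * d i.castSucc),
      Fin.sum_univ_castSucc (fun i => a i * d i.succ), Fin.sum_univ_succ]
    simp only [hprev]
    simp only [Fin.val_zero, Fin.val_succ, dite_true, Nat.add_one_ne_zero, dite_false,
      Fin.castSucc_zero, h0, Fin.succ_last, hlast, ← Fin.succ_castSucc, sub_mul,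
      Finset.sum_sub_distrib]
    ring

/-- The function `c ↦ E[f_Q(c·g)·g]` is differentiable at `c = 1`,
with derivative `Σ_{i=2}^{Q} (m_i − m_{i−1}) τ_i² φ(τ_i)`. -/
theorem quantizer_mu_deriv {Q : ℕ} (q : Quantizer Q) :
    HasDerivAt (fun c : ℝ => ∫ t, q.f (c * t) * t ∂stdGauss)
      (∑ i : Fin Q, if h : (i : ℕ) = 0 then 0 else
        (q.m i - q.m ⟨(i : ℕ) - 1, lt_of_le_of_lt (Nat.sub_le _ _) i.isLt⟩) * (q.τ i.castSucc).toReal ^ 2 * phi (q.τ i.castSucc).toReal)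
      1 := by
  have hderiv : HasDerivAt
      (fun c => ∑ i, q.m i * (scaledPhi c (q.τ i.castSucc) - scaledPhi c (q.τ i.succ)))
      (∑ i, q.m i * ((q.τ i.castSucc).toReal ^ 2 * phi (q.τ i.castSucc).toReal
        - (q.τ i.succ).toReal ^ 2 * phi (q.τ i.succ).toReal)) 1 :=
    .fun_sum fun i _ => ((hasDerivAt_scaledPhi _).sub (hasDerivAt_scaledPhi _)).const_mul _
  have heq : (fun c : ℝ => ∫ t, q.f (c * t) * t ∂stdGauss) =ᶠ[𝓝 1]
      fun c => ∑ i, q.m i * (scaledPhi c (q.τ i.castSucc) - scaledPhi c (q.τ i.succ)) :=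
    eventually_of_mem (Ioi_mem_nhds one_pos) fun c hc => q.integral_f_mul_eq_sum_scaledPhi hc
  refine (hderiv.congr_of_eventuallyEq heq).congr_deriv ?_
  rw [sum_mul_sub_succ_eq_sum_sub_mul q.m (fun j => (q.τ j).toReal ^ 2 * phi (q.τ j).toReal)
    (by simp [q.τ_bot]) (by simp [q.τ_top])]
  simp only [mul_assoc]
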